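/- arXiv:2205.04630 — 4 statements merged into one kernel-verified Lean document; each statement's English description precedes it below -/
import Mathlib

section
/- Let τ > 0 and δ > 0. For every r > 0, every complex root λ of the cubic polynomial P_r(λ) = τλ³ + λ² + (δ+τ)r²λ + r² satisfies Re λ < 0. -/
/-- For τ, δ > 0 and any r > 0, every complex root of
P_r(λ) = τλ³ + λ² + (δ+τ)r²λ + r² has negative real part. -/
theorem mgt_cubic_roots_negative_real_part (τ δ : ℝ) (hτ : 0 < τ) (hδ : 0 < δ) :
    ∀ r : ℝ, 0 < r → ∀ z : ℂ,
      (τ : ℂ) * z ^ 3 + z ^ 2 + (((δ + τ) * r ^ 2 : ℝ) : ℂ) * z + ((r ^ 2 : ℝ) : ℂ) = 0 →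
      z.re < 0 := by
  intro r hr z h
  have h1 := congrArg Complex.re h
  have h2 := congrArg Complex.im h
  simp only [Complex.add_re, Complex.add_im, Complex.mul_re, Complex.mul_im,
    Complex.ofReal_re, Complex.ofReal_im, Complex.zero_re, Complex.zero_im,
    pow_succ, pow_zero, one_mul, Complex.one_re, Complex.one_im] at h1 h2
  set x := z.re with hx0
  set y := z.im with hy0
  by_contra hx
  push_neg at hx
  have hr2 : 0 < r ^ 2 := by positivity
  by_cases hy : y = 0
  · rw [hy] at h1
    nlinarith [sq_nonneg x, mul_pos hτ hr2, mul_pos hδ hr2, sq_nonneg (x*x),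
      mul_nonneg hτ.le (mul_nonneg hx (mul_nonneg hx hx))]
  · have hy2 : 0 < y ^ 2 := by positivity
    have hS : τ * y ^ 2 = 3 * τ * x ^ 2 + 2 * x + (δ + τ) * r ^ 2 := by
      have : y * (3 * τ * x ^ 2 + 2 * x + (δ + τ) * r ^ 2 - τ * y ^ 2) = 0 := by
        ring_nf
        ring_nf at h2
        linarith [h2]
      rcases mul_eq_zero.mp this with h' | h'
      · exact absurd h' hy
      · linarith
    have key : 8 * τ ^ 2 * x ^ 3 + 8 * τ * x ^ 2 + 2 * τ * ((δ + τ) * r ^ 2) * x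
        + 2 * x + δ * r ^ 2 = 0 := by
      linear_combination (-τ) * h1 - (3 * τ * x + 1) * hS
    nlinarith [mul_pos hδ hr2, sq_nonneg x,
      mul_nonneg (mul_nonneg hτ.le hτ.le) (mul_nonneg hx (mul_nonneg hx hx)),
      mul_nonneg hτ.le (mul_nonneg hx hx),
      mul_nonneg hx (mul_pos (mul_pos hτ (by linarith : (0:ℝ) < δ + τ)) hr2).le]
end

section
/- Let τ > 0 and δ > 0, and for each sufficiently small r > 0 let λ₁(r) denote the unique real root of P_r(λ) = τλ³ + λ² + (δ+τ)r²λ + r². Then, as r → 0⁺, λ₁(r) = −1/τ + δ r² + τδ(δ−τ) r⁴ + O(r⁶); that is, the function r ↦ λ₁(r) − (−1/τ + δ r² + τδ(δ−τ) r⁴) is O(r⁶) as r → 0⁺. -/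
set_option maxHeartbeats 1000000 in
/-- Asymptotic expansion of the unique real root λ₁(r) of
P_r(λ) = τλ³ + λ² + (δ+τ)r²λ + r² as r → 0⁺:
λ₁(r) = −1/τ + δr² + τδ(δ−τ)r⁴ + O(r⁶). -/
theorem mgt_real_root_expansion (τ δ : ℝ) (hτ : 0 < τ) (hδ : 0 < δ)
    (ε₁ : ℝ) (hε₁ : 0 < ε₁) (lam1 : ℝ → ℝ)
    (hroot : ∀ r : ℝ, 0 < r → r ≤ ε₁ →
      τ * lam1 r ^ 3 + lam1 r ^ 2 + (δ + τ) * r ^ 2 * lam1 r + r ^ 2 = 0) :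
    ∃ ε₀ : ℝ, 0 < ε₀ ∧ ε₀ ≤ ε₁ ∧ ∃ C > (0 : ℝ), ∀ r : ℝ, 0 < r → r ≤ ε₀ →
      |lam1 r - (-(1 / τ) + δ * r ^ 2 + τ * δ * (δ - τ) * r ^ 4)| ≤ C * r ^ 6 := by
  have hs : (0:ℝ) < δ + τ := by positivity
  -- named constants (as plain fvars, no let bodies)
  obtain ⟨M', hM'⟩ : ∃ x : ℝ, x = 3 + τ*δ + τ^2*δ*(δ+τ) := ⟨_, rfl⟩
  have hM'pos : 0 < M' := by rw [hM']; positivity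
  obtain ⟨K', hK'⟩ : ∃ x : ℝ, x = τ*δ*(1+τ*(δ+τ))*M' := ⟨_, rfl⟩
  have hK'pos : 0 < K' := by rw [hK', hM']; positivity
  obtain ⟨CE, hCE⟩ : ∃ x : ℝ, x = 2*τ*δ^3+4*τ^2*δ^2+τ^3*δ + τ^2*δ^4+τ^3*δ^3+2*τ^4*δ^2
      + 3*τ^3*δ^5+6*τ^4*δ^4+3*τ^5*δ^3 + τ^4*δ^6+3*τ^5*δ^5+3*τ^6*δ^4+τ^7*δ^3 := ⟨_, rfl⟩
  have hCEpos : 0 < CE := by rw [hCE]; positivity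
  obtain ⟨g1, hg1⟩ : ∃ x : ℝ, x = τ^2/(8*(δ+τ)^2) := ⟨_, rfl⟩
  have hg1pos : 0 < g1 := by rw [hg1]; positivity
  refine ⟨min ε₁ (min 1 (Real.sqrt (g1/K'))), ?_, min_le_left _ _,
    8*CE*(δ+τ)^2/τ, by positivity, ?_⟩
  · have : 0 < Real.sqrt (g1/K') := Real.sqrt_pos.2 (div_pos hg1pos hK'pos)
    positivity
  intro r hr hrle
  have hrε₁ : r ≤ ε₁ := le_trans hrle (min_le_left _ _)
  have hr1 : r ≤ 1 := le_trans hrle (le_trans (min_le_right _ _) (min_le_left _ _))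
  have hrs : r ≤ Real.sqrt (g1/K') := le_trans hrle (le_trans (min_le_right _ _) (min_le_right _ _))
  have hr2K : K' * r^2 ≤ g1 := by
    have h2 : r^2 ≤ g1/K' := by
      have hss := Real.sq_sqrt (le_of_lt (div_pos hg1pos hK'pos))
      nlinarith [Real.sqrt_nonneg (g1/K'), hrs, hr.le]
    exact (le_div_iff₀' hK'pos).1 h2
  have h := hroot r hr hrε₁
  obtain ⟨l, hl⟩ : ∃ x : ℝ, x = lam1 r := ⟨_, rfl⟩
  rw [← hl] at h
  have hr2 : r^2 ≤ 1 := by nlinarith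
  have hr4 : r^4 ≤ r^2 := by nlinarith [sq_nonneg r, sq_nonneg (r^2)]
  -- the root is negative
  have hneg : l < 0 := by
    by_contra h'
    push_neg at h'
    nlinarith [mul_nonneg hτ.le (pow_nonneg h' 3), pow_pos hr 2,
      mul_nonneg (mul_nonneg hs.le (sq_nonneg r)) h', sq_nonneg l]
  -- the root is ≥ -2/τ
  have hub : -2 ≤ τ * l := by
    by_contra h'
    push_neg at h'
    have hsl : (δ+τ) * l ≤ τ * l := by nlinarith [mul_nonpos_of_nonneg_of_nonpos hδ.le hneg.le]
    have f1 : 0 ≤ l^2 * (-(τ*l+2)) := mul_nonneg (sq_nonneg l) (by linarith)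
    have f2 : 0 ≤ r^2 * (-((δ+τ)*l+1)) := mul_nonneg (sq_nonneg r) (by linarith)
    nlinarith [pow_pos hr 2, sq_nonneg l, f1, f2]
  -- the root is ≤ -1/(2(δ+τ))
  have hlb : 2 * (δ+τ) * l ≤ -1 := by
    by_contra h'
    push_neg at h'
    have hsl : (δ+τ) * l ≤ τ * l := by nlinarith [mul_nonpos_of_nonneg_of_nonpos hδ.le hneg.le]
    have f1 : 0 ≤ l^2 * (τ*l+1) := mul_nonneg (sq_nonneg l) (by linarith)
    have f2 : 0 < r^2 * ((δ+τ)*l+1) := mul_pos (pow_pos hr 2) (by linarith)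
    nlinarith [f1, f2]
  have hlsq : 1 ≤ 4 * (δ+τ)^2 * l^2 := by nlinarith [sq_nonneg (2*(δ+τ)*l+1)]
  -- A = τ·a where a is the approximate root
  obtain ⟨A, hA⟩ : ∃ x : ℝ, x = -1 + τ*δ*r^2 + τ^2*δ*(δ-τ)*r^4 := ⟨_, rfl⟩
  have hbd : ∀ c : ℝ, 0 ≤ c → c * r^4 ≤ c * r^2 ∧ 0 ≤ c * r^4 ∧ 0 ≤ c * r^2 ∧ c * r^2 ≤ c :=
    fun c hc => ⟨mul_le_mul_of_nonneg_left hr4 hc, mul_nonneg hc (by positivity),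
      mul_nonneg hc (sq_nonneg r), by nlinarith⟩
  -- |A+1| ≤ τδ(1+τ(δ+τ)) r²
  have h1 : |A + 1| ≤ τ*δ*(1+τ*(δ+τ))*r^2 := by
    rw [hA, abs_le]
    obtain ⟨b1, b2, b3, b4⟩ := hbd (τ^2*δ^2) (by positivity)
    obtain ⟨d1, d2, d3, d4⟩ := hbd (τ^3*δ) (by positivity)
    obtain ⟨e1, e2, e3, e4⟩ := hbd (τ*δ) (by positivity)
    constructor <;> linarith [b1, b2, b3, b4, d1, d2, d3, d4, e1, e2, e3, e4]
  -- |τl + A| ≤ M'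
  have h2 : |τ*l + A| ≤ M' := by
    rw [hA, hM', abs_le]
    have hτl : τ*l ≤ 0 := mul_nonpos_of_nonneg_of_nonpos hτ.le hneg.le
    obtain ⟨b1, b2, b3, b4⟩ := hbd (τ^2*δ^2) (by positivity)
    obtain ⟨d1, d2, d3, d4⟩ := hbd (τ^3*δ) (by positivity)
    obtain ⟨e1, e2, e3, e4⟩ := hbd (τ*δ) (by positivity)
    constructor <;> linarith [hτl, hub, b1, b2, b3, b4, d1, d2, d3, d4, e1, e2, e3, e4]
  -- bound on the product
  have habs : |(A+1)*(τ*l+A)| ≤ K' * r^2 := by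
    rw [abs_mul, hK']
    calc |A+1| * |τ*l+A| ≤ (τ*δ*(1+τ*(δ+τ))*r^2) * M' :=
          mul_le_mul h1 h2 (abs_nonneg _) (by positivity)
      _ = τ*δ*(1+τ*(δ+τ))*M' * r^2 := by ring
  -- the cofactor H = τ·G and its lower bound
  obtain ⟨H, hH⟩ : ∃ x : ℝ, x = τ^2*l^2 + (A+1)*(τ*l+A) + τ*(δ+τ)*r^2 := ⟨_, rfl⟩
  have hτ2l2 : τ^2/(4*(δ+τ)^2) ≤ τ^2*l^2 := by
    rw [div_le_iff₀ (by positivity)]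
    linarith [mul_le_mul_of_nonneg_left hlsq (sq_nonneg τ)]
  have h2g1 : τ^2/(4*(δ+τ)^2) = 2*g1 := by
    rw [hg1]; field_simp; ring
  have hHlb : g1 ≤ H := by
    have habs' := (abs_le.1 habs).1
    have hsr : 0 ≤ τ*(δ+τ)*r^2 := by positivity
    rw [hH]; linarith [hτ2l2, h2g1, hr2K]
  have hHpos : 0 < H := lt_of_lt_of_le hg1pos hHlb
  -- key identity: (τl − A)·H = −τ²·E
  have hid : (τ*l - A) * H = -(τ^2 * ((-2*τ*δ^3+4*τ^2*δ^2-τ^3*δ)*r^6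
      + (τ^2*δ^4+τ^3*δ^3-2*τ^4*δ^2)*r^8
      + (3*τ^3*δ^5-6*τ^4*δ^4+3*τ^5*δ^3)*r^10
      + (τ^4*δ^6-3*τ^5*δ^5+3*τ^6*δ^4-τ^7*δ^3)*r^12)) := by
    rw [hH, hA]
    linear_combination (τ^2) * h
  -- bound the error term
  have hEb : |(-2*τ*δ^3+4*τ^2*δ^2-τ^3*δ)*r^6 + (τ^2*δ^4+τ^3*δ^3-2*τ^4*δ^2)*r^8
      + (3*τ^3*δ^5-6*τ^4*δ^4+3*τ^5*δ^3)*r^10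
      + (τ^4*δ^6-3*τ^5*δ^5+3*τ^6*δ^4-τ^7*δ^3)*r^12| ≤ CE * r^6 := by
    have hb : ∀ c : ℝ, 0 ≤ c → ∀ k : ℕ, 6 ≤ k → c*r^k ≤ c*r^6 ∧ 0 ≤ c*r^k := fun c hc k hk =>
      ⟨mul_le_mul_of_nonneg_left (pow_le_pow_of_le_one hr.le hr1 hk) hc,
       mul_nonneg hc (pow_nonneg hr.le k)⟩
    obtain ⟨c1a, c1b⟩ := hb (τ^2*δ^4) (by positivity) 8 (by norm_num)
    obtain ⟨c2a, c2b⟩ := hb (τ^3*δ^3) (by positivity) 8 (by norm_num)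
    obtain ⟨c3a, c3b⟩ := hb (2*τ^4*δ^2) (by positivity) 8 (by norm_num)
    obtain ⟨c4a, c4b⟩ := hb (3*τ^3*δ^5) (by positivity) 10 (by norm_num)
    obtain ⟨c5a, c5b⟩ := hb (6*τ^4*δ^4) (by positivity) 10 (by norm_num)
    obtain ⟨c6a, c6b⟩ := hb (3*τ^5*δ^3) (by positivity) 10 (by norm_num)
    obtain ⟨c7a, c7b⟩ := hb (τ^4*δ^6) (by positivity) 12 (by norm_num)
    obtain ⟨c8a, c8b⟩ := hb (3*τ^5*δ^5) (by positivity) 12 (by norm_num)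
    obtain ⟨c9a, c9b⟩ := hb (3*τ^6*δ^4) (by positivity) 12 (by norm_num)
    obtain ⟨c10a, c10b⟩ := hb (τ^7*δ^3) (by positivity) 12 (by norm_num)
    obtain ⟨-, c11b⟩ := hb (2*τ*δ^3) (by positivity) 6 (by norm_num)
    obtain ⟨-, c12b⟩ := hb (4*τ^2*δ^2) (by positivity) 6 (by norm_num)
    obtain ⟨-, c13b⟩ := hb (τ^3*δ) (by positivity) 6 (by norm_num)
    rw [hCE, abs_le]
    constructor <;> linarith [c1a, c1b, c2a, c2b, c3a, c3b, c4a, c4b, c5a, c5b, c6a, c6b,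
      c7a, c7b, c8a, c8b, c9a, c9b, c10a, c10b, c11b, c12b, c13b]
  -- conclude
  have key : |τ*l - A| * H ≤ τ^2 * (CE * r^6) := by
    have e : |τ*l - A| * H = |(τ*l - A) * H| := by rw [abs_mul, abs_of_pos hHpos]
    rw [e, hid, abs_neg, abs_mul, abs_of_pos (by positivity : (0:ℝ) < τ^2)]
    exact mul_le_mul_of_nonneg_left hEb (by positivity)
  have key2 : |τ*l - A| * g1 ≤ τ^2 * (CE * r^6) :=
    le_trans (mul_le_mul_of_nonneg_left hHlb (abs_nonneg _)) key
  have hτabs : |τ*l - A| = τ * |lam1 r - (-(1 / τ) + δ * r ^ 2 + τ * δ * (δ - τ) * r ^ 4)| := by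
    have e : τ*l - A = τ * (lam1 r - (-(1 / τ) + δ * r ^ 2 + τ * δ * (δ - τ) * r ^ 4)) := by
      rw [hA, ← hl]
      field_simp
    rw [e, abs_mul, abs_of_pos hτ]
  rw [hτabs, hg1] at key2
  rw [mul_div_assoc'] at key2
  have key3 := (div_le_iff₀ (by positivity : (0:ℝ) < 8*(δ+τ)^2)).1 key2
  rw [div_mul_eq_mul_div, le_div_iff₀ hτ]
  exact le_of_mul_le_mul_right (by linarith [key3]) (by positivity : (0:ℝ) < τ^2)
end

section
/- Let τ > 0 and δ > 0. For each sufficiently small r > 0 let λ₁(r) be the unique real root of P_r(λ) = τλ³ + λ² + (δ+τ)r²λ + r², and write the two non-real roots of P_r as μ_R(r) ± i μ_I(r) with μ_I(r) > 0. Then, as r → 0⁺, μ_R(r) = −(δ/2) r² − (τδ(δ−τ)/2) r⁴ + O(r⁶) and μ_I(r) = r + (δ(4τ−δ)/8) r³ + O(r⁵). -/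
set_option maxHeartbeats 1000000 in
set_option maxHeartbeats 1000000 in
private lemma mgt_aux_sign (τ δ a r : ℝ) (hτ : 0 < τ) (hδ : 0 < δ) (hr : 0 < r)
    (hq1' : 4*δ*(δ+τ)^2 * r^2 ≤ τ)
    (hQ : 4*τ^2*a^3 + 4*τ*a^2 + a + τ*(δ+τ)*r^2*a + δ*r^2/2 = 0) :
    -(2*δ*r^2) ≤ a ∧ a < 0 := by
  have hden : a * ((2*τ*a+1)^2 + τ*(δ+τ)*r^2) = -(δ*r^2/2) := by
    linear_combination hQ
  have hDpos : 0 < (2*τ*a+1)^2 + τ*(δ+τ)*r^2 := by positivity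
  have haneg : a < 0 := by
    by_contra hcon
    push_neg at hcon
    have h1 : 0 ≤ a * ((2*τ*a+1)^2 + τ*(δ+τ)*r^2) := mul_nonneg hcon hDpos.le
    rw [hden] at h1
    have h2 : 0 < δ*r^2/2 := by positivity
    linarith
  refine ⟨?_, haneg⟩
  rcases le_or_gt (1/4 : ℝ) ((2*τ*a+1)^2) with hs | hs
  · have hD4 : (1/4 : ℝ) ≤ (2*τ*a+1)^2 + τ*(δ+τ)*r^2 := by
      nlinarith [mul_pos (mul_pos hτ (show (0:ℝ) < δ+τ by linarith)) (mul_pos hr hr)]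
    nlinarith [mul_le_mul_of_nonpos_left hD4 haneg.le]
  · exfalso
    have h4τa : 4*τ*a < -1 := by nlinarith [sq_nonneg (2*τ*a+1)]
    rcases le_or_gt ((2*τ*a+1)^2) (τ*δ*r^2) with hs2 | hs2
    · have hy : 2*(δ+τ)*(2*τ*a+1) ≤ τ := by
        by_contra hcon
        push_neg at hcon
        nlinarith [sq_nonneg (2*τ*a+1), mul_pos hτ hδ, sq_nonneg r]
      have hlin : τ*(δ+τ)*a + δ/2 ≤ -τ/4 := by nlinarith
      have hAS : a * (2*τ*a+1)^2 ≤ 0 :=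
        mul_nonpos_of_nonpos_of_nonneg haneg.le (sq_nonneg _)
      nlinarith [mul_le_mul_of_nonneg_left hlin (sq_nonneg r), mul_pos hτ (mul_pos hr hr)]
    · have h7 : (4*τ*a) * (2*τ*a+1)^2 ≤ -1 * (2*τ*a+1)^2 :=
        mul_le_mul_of_nonneg_right h4τa.le (sq_nonneg _)
      have h8 : τ*(δ+τ)*a ≤ -(δ+τ)/4 := by
        nlinarith [mul_le_mul_of_nonneg_left h4τa.le (by positivity : (0:ℝ) ≤ (δ+τ)/4)]
      nlinarith [mul_le_mul_of_nonneg_left h8 (sq_nonneg r), mul_pos hδ (mul_pos hr hr),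
        mul_pos hτ hδ, mul_pos (mul_pos hτ hδ) (mul_pos hr hr)]

set_option maxHeartbeats 1000000 in
private lemma mgt_aux_a0bnd (τ δ r : ℝ) (hτ : 0 < τ) (hδ : 0 < δ) (hr : 0 < r) (hr1 : r ≤ 1) :
    |(-(δ / 2) * r ^ 2 - τ * δ * (δ - τ) / 2 * r ^ 4 : ℝ)| ≤ (δ/2 + τ*δ*(δ+τ)/2) * r^2 := by
  have hr42 : r^4 ≤ r^2 := pow_le_pow_of_le_one hr.le hr1 (by norm_num)
  have h1 : τ*δ*(δ-τ)/2 * r^4 ≤ τ*δ*(δ+τ)/2 * r^4 := by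
    nlinarith [mul_nonneg (mul_nonneg (mul_pos hτ hδ).le hτ.le) (pow_nonneg hr.le 4)]
  have h2 : τ*δ*(δ+τ)/2 * r^4 ≤ τ*δ*(δ+τ)/2 * r^2 :=
    mul_le_mul_of_nonneg_left hr42 (by positivity)
  have h3 : -(τ*δ*(δ+τ)/2) * r^4 ≤ τ*δ*(δ-τ)/2 * r^4 := by
    nlinarith [mul_nonneg (mul_nonneg (mul_pos hτ hδ).le hτ.le) (pow_nonneg hr.le 4)]
  have h4 : (0:ℝ) ≤ τ*δ*(δ+τ)/2 * r^4 := by positivity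
  rw [abs_le]
  constructor <;> nlinarith

set_option maxHeartbeats 1000000 in
private lemma mgt_aux_a (τ δ a r : ℝ) (hτ : 0 < τ) (hδ : 0 < δ) (hr : 0 < r) (hr1 : r ≤ 1)
    (hq2' : 8*τ*(2*δ + (δ/2 + τ*δ*(δ+τ)/2)) * r^2 ≤ 1)
    (hQ : 4*τ^2*a^3 + 4*τ*a^2 + a + τ*(δ+τ)*r^2*a + δ*r^2/2 = 0)
    (halow : -(2*δ*r^2) ≤ a) (haneg : a < 0) :
    |a - (-(δ / 2) * r ^ 2 - τ * δ * (δ - τ) / 2 * r ^ 4)| ≤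
      2*(|τ^2*δ^3 - 2*τ^3*δ^2 + τ^4*δ/2| + |τ^5*δ^2 - τ^3*δ^4/2 - τ^4*δ^3/2|
        + |-(3/2)*τ^4*δ^5 + 3*τ^5*δ^4 - (3/2)*τ^6*δ^3|
        + |-(1/2)*τ^5*δ^6 + (3/2)*τ^6*δ^5 - (3/2)*τ^7*δ^4 + (1/2)*τ^8*δ^3|)*r^6 := by
  obtain ⟨Ka, hKadef⟩ : ∃ x : ℝ, x = δ/2 + τ*δ*(δ+τ)/2 := ⟨_, rfl⟩
  obtain ⟨a₀, ha₀def⟩ : ∃ x : ℝ, x = -(δ / 2) * r ^ 2 - τ * δ * (δ - τ) / 2 * r ^ 4 := ⟨_, rfl⟩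
  rw [← ha₀def]
  have ha₀bnd : |a₀| ≤ Ka * r^2 := by
    rw [ha₀def, hKadef]; exact mgt_aux_a0bnd τ δ r hτ hδ hr hr1
  rw [← hKadef] at hq2'
  obtain ⟨S, hSdef⟩ : ∃ x : ℝ,
      x = 4*τ^2*(a^2 + a*a₀ + a₀^2) + 4*τ*(a + a₀) + 1 + τ*(δ+τ)*r^2 := ⟨_, rfl⟩
  have hKa : 0 < Ka := by rw [hKadef]; positivity
  have hS : 1/2 ≤ S := by
    have h1 : 0 ≤ a^2 + a*a₀ + a₀^2 := by nlinarith [sq_nonneg (a+a₀), sq_nonneg a, sq_nonneg a₀]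
    have h2 : -(2*δ+Ka)*r^2 ≤ a + a₀ := by
      have := abs_le.mp ha₀bnd
      nlinarith
    rw [hSdef]
    nlinarith [mul_le_mul_of_nonneg_left h2 (by positivity : (0:ℝ) ≤ 4*τ),
      mul_nonneg (by positivity : (0:ℝ) ≤ 4*τ^2) h1,
      mul_pos hτ (mul_pos (by linarith : (0:ℝ) < δ+τ) (mul_pos hr hr))]
  have hSpos : 0 < S := by linarith
  obtain ⟨G, hGdef⟩ : ∃ x : ℝ, x = (τ^2*δ^3 - 2*τ^3*δ^2 + τ^4*δ/2)
      + (τ^5*δ^2 - τ^3*δ^4/2 - τ^4*δ^3/2) * r^2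
      + (-(3/2)*τ^4*δ^5 + 3*τ^5*δ^4 - (3/2)*τ^6*δ^3) * r^4
      + (-(1/2)*τ^5*δ^6 + (3/2)*τ^6*δ^5 - (3/2)*τ^7*δ^4 + (1/2)*τ^8*δ^3) * r^6 := ⟨_, rfl⟩
  have hkey : (a - a₀) * S = -(r^6 * G) := by
    rw [hSdef, hGdef, ha₀def]
    linear_combination hQ
  obtain ⟨CG, hCGdef⟩ : ∃ x : ℝ,
      x = |τ^2*δ^3 - 2*τ^3*δ^2 + τ^4*δ/2| + |τ^5*δ^2 - τ^3*δ^4/2 - τ^4*δ^3/2|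
      + |-(3/2)*τ^4*δ^5 + 3*τ^5*δ^4 - (3/2)*τ^6*δ^3|
      + |-(1/2)*τ^5*δ^6 + (3/2)*τ^6*δ^5 - (3/2)*τ^7*δ^4 + (1/2)*τ^8*δ^3| := ⟨_, rfl⟩
  rw [← hCGdef]
  have hGbnd : |G| ≤ CG := by
    rw [hGdef, hCGdef]
    have habs2 : |(τ^5*δ^2 - τ^3*δ^4/2 - τ^4*δ^3/2) * r^2| ≤ |τ^5*δ^2 - τ^3*δ^4/2 - τ^4*δ^3/2| := by
      rw [abs_mul, abs_of_nonneg (by positivity : (0:ℝ) ≤ r^2)]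
      nlinarith [mul_le_mul_of_nonneg_left (pow_le_one₀ hr.le hr1 (n := 2))
        (abs_nonneg (τ^5*δ^2 - τ^3*δ^4/2 - τ^4*δ^3/2))]
    have habs4 : |(-(3/2)*τ^4*δ^5 + 3*τ^5*δ^4 - (3/2)*τ^6*δ^3) * r^4| ≤ |-(3/2)*τ^4*δ^5 + 3*τ^5*δ^4 - (3/2)*τ^6*δ^3| := by
      rw [abs_mul, abs_of_nonneg (by positivity : (0:ℝ) ≤ r^4)]
      nlinarith [mul_le_mul_of_nonneg_left (pow_le_one₀ hr.le hr1 (n := 4))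
        (abs_nonneg (-(3/2)*τ^4*δ^5 + 3*τ^5*δ^4 - (3/2)*τ^6*δ^3))]
    have habs6 : |(-(1/2)*τ^5*δ^6 + (3/2)*τ^6*δ^5 - (3/2)*τ^7*δ^4 + (1/2)*τ^8*δ^3) * r^6| ≤ |-(1/2)*τ^5*δ^6 + (3/2)*τ^6*δ^5 - (3/2)*τ^7*δ^4 + (1/2)*τ^8*δ^3| := by
      rw [abs_mul, abs_of_nonneg (by positivity : (0:ℝ) ≤ r^6)]
      nlinarith [mul_le_mul_of_nonneg_left (pow_le_one₀ hr.le hr1 (n := 6))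
        (abs_nonneg (-(1/2)*τ^5*δ^6 + (3/2)*τ^6*δ^5 - (3/2)*τ^7*δ^4 + (1/2)*τ^8*δ^3))]
    have t1 := abs_add_le ((τ^2*δ^3 - 2*τ^3*δ^2 + τ^4*δ/2)
      + (τ^5*δ^2 - τ^3*δ^4/2 - τ^4*δ^3/2) * r^2
      + (-(3/2)*τ^4*δ^5 + 3*τ^5*δ^4 - (3/2)*τ^6*δ^3) * r^4)
      ((-(1/2)*τ^5*δ^6 + (3/2)*τ^6*δ^5 - (3/2)*τ^7*δ^4 + (1/2)*τ^8*δ^3) * r^6)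
    have t2 := abs_add_le ((τ^2*δ^3 - 2*τ^3*δ^2 + τ^4*δ/2)
      + (τ^5*δ^2 - τ^3*δ^4/2 - τ^4*δ^3/2) * r^2)
      ((-(3/2)*τ^4*δ^5 + 3*τ^5*δ^4 - (3/2)*τ^6*δ^3) * r^4)
    have t3 := abs_add_le (τ^2*δ^3 - 2*τ^3*δ^2 + τ^4*δ/2)
      ((τ^5*δ^2 - τ^3*δ^4/2 - τ^4*δ^3/2) * r^2)
    linarith
  have habs : |a - a₀| * S ≤ CG * r^6 := by
    calc |a - a₀| * S = |(a - a₀) * S| := by rw [abs_mul, abs_of_pos hSpos]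
    _ = r^6 * |G| := by rw [hkey, abs_neg, abs_mul, abs_of_nonneg (by positivity : (0:ℝ) ≤ r^6)]
    _ ≤ r^6 * CG := mul_le_mul_of_nonneg_left hGbnd (by positivity)
    _ = CG * r^6 := by ring
  nlinarith [mul_le_mul_of_nonneg_left hS (abs_nonneg (a - a₀)), abs_nonneg (a - a₀), pow_pos hr 6]

set_option maxHeartbeats 1000000 in
private lemma mgt_aux_b (τ δ a b r CG : ℝ) (hτ : 0 < τ) (hδ : 0 < δ) (hr : 0 < r) (hr1 : r ≤ 1)
    (hbpos : 0 < b) (hCG : 0 ≤ CG)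
    (hq3' : (2*(δ*(4*τ+δ)/8)+1) * r^2 ≤ 1)
    (hB : τ*b^2 = 3*τ*a^2 + 2*a + (δ+τ)*r^2)
    (halow : -(2*δ*r^2) ≤ a) (haneg : a < 0)
    (hda : |a - (-(δ / 2) * r ^ 2 - τ * δ * (δ - τ) / 2 * r ^ 4)| ≤ 2*CG*r^6) :
    |b - (r + δ * (4 * τ - δ) / 8 * r ^ 3)| ≤
      (2*(3*τ*(2*δ + (δ/2 + τ*δ*(δ+τ)/2))*(2*CG) + 4*CG
        + |-τ*δ^4/64 + 13*τ^2*δ^3/8 - 7*τ^3*δ^2/4|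
        + |3/4*τ^3*δ^4 - 3/2*τ^4*δ^3 + 3/4*τ^5*δ^2|)/τ)*r^5 := by
  obtain ⟨Ka, hKadef⟩ : ∃ x : ℝ, x = δ/2 + τ*δ*(δ+τ)/2 := ⟨_, rfl⟩
  obtain ⟨a₀, ha₀def⟩ : ∃ x : ℝ, x = -(δ / 2) * r ^ 2 - τ * δ * (δ - τ) / 2 * r ^ 4 := ⟨_, rfl⟩
  obtain ⟨b₀, hb₀def⟩ : ∃ x : ℝ, x = r + δ * (4 * τ - δ) / 8 * r ^ 3 := ⟨_, rfl⟩
  obtain ⟨CE, hCEdef⟩ : ∃ x : ℝ, x = 3*τ*(2*δ+Ka)*(2*CG) + 4*CG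
      + |-τ*δ^4/64 + 13*τ^2*δ^3/8 - 7*τ^3*δ^2/4|
      + |3/4*τ^3*δ^4 - 3/2*τ^4*δ^3 + 3/4*τ^5*δ^2| := ⟨_, rfl⟩
  rw [← ha₀def] at hda
  rw [← hb₀def, ← hKadef, ← hCEdef]
  have hKa : 0 < Ka := by rw [hKadef]; positivity
  have hrsq1 : r^2 ≤ 1 := pow_le_one₀ hr.le hr1
  have ha₀bnd : |a₀| ≤ Ka * r^2 := by
    rw [ha₀def, hKadef]; exact mgt_aux_a0bnd τ δ r hτ hδ hr hr1
  have ha₀bnd' : |a₀| ≤ Ka := ha₀bnd.trans (by nlinarith)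
  have habnd' : |a| ≤ 2*δ := by
    rw [abs_le]; constructor <;> nlinarith
  have hsumbnd : |a + a₀| ≤ 2*δ + Ka := by
    calc |a + a₀| ≤ |a| + |a₀| := abs_add_le _ _
    _ ≤ 2*δ + Ka := add_le_add habnd' ha₀bnd'
  have hbsq : τ*(b^2 - b₀^2) = 3*τ*(a+a₀)*(a-a₀) + 2*(a-a₀)
      + r^6 * ((-τ*δ^4/64 + 13*τ^2*δ^3/8 - 7*τ^3*δ^2/4)
        + (3/4*τ^3*δ^4 - 3/2*τ^4*δ^3 + 3/4*τ^5*δ^2) * r^2) := by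
    rw [ha₀def, hb₀def]
    linear_combination hB
  have hbbsq : τ * |b^2 - b₀^2| ≤ CE * r^6 := by
    have h1 : |3*τ*(a+a₀)*(a-a₀)| ≤ 3*τ*(2*δ+Ka)*(2*CG*r^6) := by
      rw [abs_mul, abs_mul, abs_of_pos (by positivity : (0:ℝ) < 3*τ)]
      have h0 := mul_le_mul hsumbnd hda (abs_nonneg _) (by positivity : (0:ℝ) ≤ 2*δ+Ka)
      nlinarith
    have h2 : |2*(a-a₀)| ≤ 4*CG*r^6 := by
      rw [abs_mul, abs_of_pos (by norm_num : (0:ℝ) < 2)]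
      linarith
    have h3 : |r^6 * ((-τ*δ^4/64 + 13*τ^2*δ^3/8 - 7*τ^3*δ^2/4)
        + (3/4*τ^3*δ^4 - 3/2*τ^4*δ^3 + 3/4*τ^5*δ^2) * r^2)|
        ≤ (|-τ*δ^4/64 + 13*τ^2*δ^3/8 - 7*τ^3*δ^2/4|
          + |3/4*τ^3*δ^4 - 3/2*τ^4*δ^3 + 3/4*τ^5*δ^2|) * r^6 := by
      rw [abs_mul, abs_of_nonneg (by positivity : (0:ℝ) ≤ r^6)]
      have h4 : |(-τ*δ^4/64 + 13*τ^2*δ^3/8 - 7*τ^3*δ^2/4)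
          + (3/4*τ^3*δ^4 - 3/2*τ^4*δ^3 + 3/4*τ^5*δ^2) * r^2|
          ≤ |-τ*δ^4/64 + 13*τ^2*δ^3/8 - 7*τ^3*δ^2/4|
            + |3/4*τ^3*δ^4 - 3/2*τ^4*δ^3 + 3/4*τ^5*δ^2| := by
        have t1 := abs_add_le (-τ*δ^4/64 + 13*τ^2*δ^3/8 - 7*τ^3*δ^2/4)
          ((3/4*τ^3*δ^4 - 3/2*τ^4*δ^3 + 3/4*τ^5*δ^2) * r^2)
        have t2 : |(3/4*τ^3*δ^4 - 3/2*τ^4*δ^3 + 3/4*τ^5*δ^2) * r^2|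
            ≤ |3/4*τ^3*δ^4 - 3/2*τ^4*δ^3 + 3/4*τ^5*δ^2| := by
          rw [abs_mul, abs_of_nonneg (by positivity : (0:ℝ) ≤ r^2)]
          nlinarith [mul_le_mul_of_nonneg_left hrsq1
            (abs_nonneg (3/4*τ^3*δ^4 - 3/2*τ^4*δ^3 + 3/4*τ^5*δ^2))]
        linarith
      nlinarith [pow_pos hr 6]
    calc τ * |b^2 - b₀^2| = |τ*(b^2 - b₀^2)| := by rw [abs_mul, abs_of_pos hτ]
    _ = |3*τ*(a+a₀)*(a-a₀) + 2*(a-a₀)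
      + r^6 * ((-τ*δ^4/64 + 13*τ^2*δ^3/8 - 7*τ^3*δ^2/4)
        + (3/4*τ^3*δ^4 - 3/2*τ^4*δ^3 + 3/4*τ^5*δ^2) * r^2)| := by rw [hbsq]
    _ ≤ CE * r^6 := by
        have t1 := abs_add_le (3*τ*(a+a₀)*(a-a₀) + 2*(a-a₀))
          (r^6 * ((-τ*δ^4/64 + 13*τ^2*δ^3/8 - 7*τ^3*δ^2/4)
            + (3/4*τ^3*δ^4 - 3/2*τ^4*δ^3 + 3/4*τ^5*δ^2) * r^2))
        have t2 := abs_add_le (3*τ*(a+a₀)*(a-a₀)) (2*(a-a₀))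
        rw [hCEdef]
        linarith
  have hc₃ : -(δ*(4*τ+δ)/8) ≤ δ * (4 * τ - δ) / 8 := by nlinarith
  have hb₀low : r/2 ≤ b₀ := by
    rw [hb₀def]
    have h1 : -(δ*(4*τ+δ)/8) * r^3 ≤ δ * (4 * τ - δ) / 8 * r^3 :=
      mul_le_mul_of_nonneg_right hc₃ (by positivity)
    nlinarith [mul_le_mul_of_nonneg_right hq3' hr.le]
  have hfac : |b - b₀| * (b + b₀) = |b^2 - b₀^2| := by
    rw [show b^2 - b₀^2 = (b - b₀) * (b + b₀) from by ring, abs_mul,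
      abs_of_pos (by linarith : (0:ℝ) < b + b₀)]
  have h1 : |b - b₀| * (r/2) ≤ |b^2 - b₀^2| := by
    rw [← hfac]
    exact mul_le_mul_of_nonneg_left (by linarith) (abs_nonneg _)
  have h2 : |b - b₀| * (τ*(r/2)) ≤ CE * r^6 := by
    have h0 := mul_le_mul_of_nonneg_left h1 hτ.le
    nlinarith
  have h3 : |b - b₀| ≤ CE * r^6 / (τ*(r/2)) :=
    (le_div_iff₀ (by positivity)).mpr h2
  have h4 : CE * r^6 / (τ*(r/2)) = (2*CE/τ)*r^5 := by
    field_simp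
  rw [h4] at h3
  exact h3

set_option maxHeartbeats 1000000 in
/-- Asymptotic expansions of the real and imaginary parts μ_R(r), μ_I(r) of the pair of
non-real complex-conjugate roots μ_R(r) ± i μ_I(r) (with μ_I(r) > 0) of
P_r(λ) = τλ³ + λ² + (δ+τ)r²λ + r² as r → 0⁺:
μ_R(r) = −(δ/2)r² − (τδ(δ−τ)/2)r⁴ + O(r⁶) and μ_I(r) = r + (δ(4τ−δ)/8)r³ + O(r⁵). -/
theorem mgt_complex_roots_expansion (τ δ : ℝ) (hτ : 0 < τ) (hδ : 0 < δ)
    (ε₁ : ℝ) (hε₁ : 0 < ε₁) (lam1 muR muI : ℝ → ℝ)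
    (hlam : ∀ r : ℝ, 0 < r → r ≤ ε₁ →
      τ * lam1 r ^ 3 + lam1 r ^ 2 + (δ + τ) * r ^ 2 * lam1 r + r ^ 2 = 0)
    (hmuI : ∀ r : ℝ, 0 < r → r ≤ ε₁ → 0 < muI r)
    (hmu : ∀ r : ℝ, 0 < r → r ≤ ε₁ →
      (τ : ℂ) * ((muR r : ℂ) + (muI r : ℂ) * Complex.I) ^ 3
        + ((muR r : ℂ) + (muI r : ℂ) * Complex.I) ^ 2
        + (((δ + τ) * r ^ 2 : ℝ) : ℂ) * ((muR r : ℂ) + (muI r : ℂ) * Complex.I)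
        + ((r ^ 2 : ℝ) : ℂ) = 0) :
    ∃ ε₀ : ℝ, 0 < ε₀ ∧ ε₀ ≤ ε₁ ∧ ∃ C > (0 : ℝ), ∀ r : ℝ, 0 < r → r ≤ ε₀ →
      |muR r - (-(δ / 2) * r ^ 2 - τ * δ * (δ - τ) / 2 * r ^ 4)| ≤ C * r ^ 6 ∧
      |muI r - (r + δ * (4 * τ - δ) / 8 * r ^ 3)| ≤ C * r ^ 5 := by
  obtain ⟨CG, hCGdef⟩ : ∃ x : ℝ,
      x = |τ^2*δ^3 - 2*τ^3*δ^2 + τ^4*δ/2| + |τ^5*δ^2 - τ^3*δ^4/2 - τ^4*δ^3/2|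
      + |-(3/2)*τ^4*δ^5 + 3*τ^5*δ^4 - (3/2)*τ^6*δ^3|
      + |-(1/2)*τ^5*δ^6 + (3/2)*τ^6*δ^5 - (3/2)*τ^7*δ^4 + (1/2)*τ^8*δ^3| := ⟨_, rfl⟩
  have hCG : 0 ≤ CG := by rw [hCGdef]; positivity
  obtain ⟨CE, hCEdef⟩ : ∃ x : ℝ, x = 3*τ*(2*δ + (δ/2 + τ*δ*(δ+τ)/2))*(2*CG) + 4*CG
      + |-τ*δ^4/64 + 13*τ^2*δ^3/8 - 7*τ^3*δ^2/4|
      + |3/4*τ^3*δ^4 - 3/2*τ^4*δ^3 + 3/4*τ^5*δ^2| := ⟨_, rfl⟩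
  have hCE : 0 ≤ CE := by rw [hCEdef]; positivity
  obtain ⟨C, hCdef⟩ : ∃ x : ℝ, x = 2*CG + 2*CE/τ + 1 := ⟨_, rfl⟩
  have hCpos : 0 < C := by rw [hCdef]; positivity
  obtain ⟨ε₀, hε₀def⟩ : ∃ x : ℝ, x = min (min ε₁ 1) (min (τ/(4*δ*(δ+τ)^2))
      (min (1/(8*τ*(2*δ + (δ/2 + τ*δ*(δ+τ)/2)))) (1/(2*(δ*(4*τ+δ)/8)+1)))) := ⟨_, rfl⟩
  have hε₀pos : 0 < ε₀ := by rw [hε₀def]; positivity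
  have hε₀ε₁ : ε₀ ≤ ε₁ := by rw [hε₀def]; exact (min_le_left _ _).trans (min_le_left _ _)
  refine ⟨ε₀, hε₀pos, hε₀ε₁, C, hCpos, ?_⟩
  intro r hr hrε₀
  have hr1 : r ≤ 1 := hrε₀.trans (by rw [hε₀def]; exact (min_le_left _ _).trans (min_le_right _ _))
  have hrsq : r^2 ≤ r := by nlinarith
  have hq1 : r^2 ≤ τ/(4*δ*(δ+τ)^2) :=
    hrsq.trans (hrε₀.trans (by rw [hε₀def]; exact (min_le_right _ _).trans (min_le_left _ _)))
  have hq2 : r^2 ≤ 1/(8*τ*(2*δ + (δ/2 + τ*δ*(δ+τ)/2))) :=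
    hrsq.trans (hrε₀.trans (by
      rw [hε₀def]; exact (min_le_right _ _).trans ((min_le_right _ _).trans (min_le_left _ _))))
  have hq3 : r^2 ≤ 1/(2*(δ*(4*τ+δ)/8)+1) :=
    hrsq.trans (hrε₀.trans (by
      rw [hε₀def]; exact (min_le_right _ _).trans ((min_le_right _ _).trans (min_le_right _ _))))
  have hq1' : 4*δ*(δ+τ)^2 * r^2 ≤ τ := by
    have h := (le_div_iff₀ (by positivity : (0:ℝ) < 4*δ*(δ+τ)^2)).mp hq1
    linarith
  have hq2' : 8*τ*(2*δ + (δ/2 + τ*δ*(δ+τ)/2)) * r^2 ≤ 1 := by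
    have h := (le_div_iff₀ (by positivity : (0:ℝ) < 8*τ*(2*δ + (δ/2 + τ*δ*(δ+τ)/2)))).mp hq2
    linarith
  have hq3' : (2*(δ*(4*τ+δ)/8)+1) * r^2 ≤ 1 := by
    have h := (le_div_iff₀ (by positivity : (0:ℝ) < 2*(δ*(4*τ+δ)/8)+1)).mp hq3
    linarith
  have hrε₁ : r ≤ ε₁ := hrε₀.trans hε₀ε₁
  have hre := congrArg Complex.re (hmu r hr hrε₁)
  have him := congrArg Complex.im (hmu r hr hrε₁)
  simp only [pow_succ, pow_zero, one_mul, Complex.add_re, Complex.add_im,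
    Complex.mul_re, Complex.mul_im, Complex.ofReal_re, Complex.ofReal_im,
    Complex.I_re, Complex.I_im, Complex.zero_re, Complex.zero_im] at hre him
  have hbpos := hmuI r hr hrε₁
  have hRe : τ*((muR r)^3 - 3*(muR r)*(muI r)^2) + ((muR r)^2 - (muI r)^2)
      + (δ+τ)*r^2*(muR r) + r^2 = 0 := by linear_combination hre
  have hIm : τ*(3*(muR r)^2*(muI r) - (muI r)^3) + 2*(muR r)*(muI r) + (δ+τ)*r^2*(muI r) = 0 := by
    linear_combination him
  have hB : τ*(muI r)^2 = 3*τ*(muR r)^2 + 2*(muR r) + (δ+τ)*r^2 := by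
    have h : (muI r) * (3*τ*(muR r)^2 + 2*(muR r) + (δ+τ)*r^2 - τ*(muI r)^2) = 0 := by
      linear_combination hIm
    rcases mul_eq_zero.mp h with h | h
    · exact absurd h hbpos.ne'
    · linarith
  have hQ : 4*τ^2*(muR r)^3 + 4*τ*(muR r)^2 + (muR r) + τ*(δ+τ)*r^2*(muR r) + δ*r^2/2 = 0 := by
    linear_combination (-(τ/2)) * hRe - ((3*τ*(muR r)+1)/2) * hB
  obtain ⟨halow, haneg⟩ := mgt_aux_sign τ δ (muR r) r hτ hδ hr hq1' hQ
  have hda := mgt_aux_a τ δ (muR r) r hτ hδ hr hr1 hq2' hQ halow haneg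
  rw [← hCGdef] at hda
  have hdb := mgt_aux_b τ δ (muR r) (muI r) r CG hτ hδ hr hr1 hbpos hCG hq3' hB halow haneg hda
  rw [← hCEdef] at hdb
  constructor
  · refine hda.trans ?_
    have h1 : 2*CG ≤ C := by
      have h2 : 0 ≤ 2*CE/τ := by positivity
      rw [hCdef]; linarith
    exact mul_le_mul_of_nonneg_right h1 (by positivity)
  · refine hdb.trans ?_
    have h1 : 2*CE/τ ≤ C := by rw [hCdef]; linarith
    exact mul_le_mul_of_nonneg_right h1 (by positivity)
end

section
/- Let n ≥ 1 be an integer, δ > 0 and k ≥ 0 a real number. Let A₀, A₁ ∈ ℝ and B ∈ ℝⁿ, not all zero (i.e. A₀ ≠ 0 or A₁ ≠ 0 or B ≠ 0). Define, for t > 0, F(t) := ∫_{ℝⁿ} |ξ|^{2k} e^{−δ|ξ|²t} [ (−A₀ t |ξ|² + A₁)² cos²(|ξ|t) + (B · ξ/|ξ|)² sin²(|ξ|t) ] dξ. Then there exist constants c > 0, C > 0 and T > 0 such that for all t ≥ T: c t^{−k−n/2} ≤ F(t) ≤ C t^{−k−n/2}. -/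
/-!
Substituting `ξ = η / √t` gives `F(t) = t ^ (-k - n/2) G(√t)` with
`G(s) = ∫ a(η) cos²(s |η|) + b(η) sin²(s |η|) dη`, where `a = cosWeight` and `b = sinWeight` are
fixed nonnegative integrable weights, not both a.e. zero. Clearly `G ≤ ∫ a + ∫ b`. Writing
`cos²` and `sin²` through `cos (2 s |η|)` and passing to polar coordinates, the one-dimensional
Riemann–Lebesgue lemma gives `G(s) → (∫ a + ∫ b) / 2`, so `G(√t) ≥ (∫ a + ∫ b) / 4` for large `t`.
-/

open MeasureTheory Filter Set Topology Real
open scoped FourierTransform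

local notation "dim" => Module.finrank ℝ

theorem Real.tendsto_integral_mul_cos_mul_atTop {u : ℝ → ℝ} (hu : Integrable u) :
    Tendsto (fun s : ℝ => ∫ r, u r * cos (s * r)) atTop (𝓝 0) := by
  have hRL : Tendsto (fun w : ℝ => ∫ v : ℝ, 𝐞 (-(v * w)) • (u v : ℂ)) (cocompact ℝ) (𝓝 0) :=
    Real.tendsto_integral_exp_smul_cocompact _
  have hscale : Tendsto (fun s : ℝ => s / (2 * π)) atTop (cocompact ℝ) :=
    (tendsto_id.atTop_div_const (by positivity)).mono_right
      (by rw [cocompact_eq_atBot_atTop]; exact le_sup_right)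
  -- `u r * cos (s * r)` is the real part of `𝐞 (-(r * (s / (2 * π)))) • u r`.
  refine ((Complex.continuous_re.tendsto 0).comp (hRL.comp hscale)).congr fun s => ?_
  have hint : Integrable (fun v : ℝ => 𝐞 (-(v * (s / (2 * π)))) • (u v : ℂ)) := by
    simpa [RCLike.inner_apply, mul_comm (s / (2 * π))] using
      (fourierIntegral_convergent_iff (f := fun v : ℝ => (u v : ℂ)) (s / (2 * π))).2 hu.ofReal
  rw [Function.comp_apply, Function.comp_apply, ← RCLike.re_to_complex, ← integral_re hint]
  refine integral_congr_ae (.of_forall fun v => ?_)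
  have hphase : 2 * π * -(v * (s / (2 * π))) = -(s * v) := by field_simp
  simp only [RCLike.re_to_complex]
  rw [Circle.smul_def, Real.fourierChar_apply, hphase, smul_eq_mul, Complex.mul_re,
    Complex.ofReal_im, Complex.ofReal_re, Complex.exp_ofReal_mul_I_re,
    Complex.exp_ofReal_mul_I_im, cos_neg]
  ring

theorem comp_homeomorphUnitSphereProd_eq {E F : Type*} [NormedAddCommGroup E]
    [NormedSpace ℝ E] (f : E → F) :
    (fun p : Metric.sphere (0 : E) 1 × Ioi (0 : ℝ) => f (p.2.1 • p.1.1)) ∘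
      homeomorphUnitSphereProd E = f ∘ Subtype.val := by
  ext ⟨x, hx⟩
  simp [smul_inv_smul₀ (norm_ne_zero_iff.2 hx)]

namespace MeasureTheory

theorem integral_pos_of_nonneg_of_ae_ne_zero {α : Type*} [MeasurableSpace α]
    {μ : Measure α} [NeZero μ] {f : α → ℝ} (hf : 0 ≤ f) (hfi : Integrable f μ)
    (hne : ∀ᵐ x ∂μ, f x ≠ 0) : 0 < ∫ x, f x ∂μ := by
  rw [integral_pos_iff_support_of_nonneg hf hfi, pos_iff_ne_zero]
  intro hsupp
  have hcompl : μ (Function.support f)ᶜ = 0 := ae_iff.1 (by simpa using hne)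
  have huniv := measure_union_null hsupp hcompl
  rw [union_compl_self, Measure.measure_univ_eq_zero] at huniv
  exact NeZero.ne μ huniv

theorem integral_mul_cos_sq_add_mul_sin_sq_le {α : Type*} [MeasurableSpace α]
    {μ : Measure α} {a b : α → ℝ} (ha0 : 0 ≤ a) (hb0 : 0 ≤ b) (ha : Integrable a μ)
    (hb : Integrable b μ) (θ : α → ℝ) :
    ∫ x, a x * cos (θ x) ^ 2 + b x * sin (θ x) ^ 2 ∂μ ≤ ∫ x, a x ∂μ + ∫ x, b x ∂μ := by
  rw [← integral_add ha hb]
  refine integral_mono_of_nonneg (.of_forall fun x => add_nonneg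
    (mul_nonneg (ha0 x) (sq_nonneg _)) (mul_nonneg (hb0 x) (sq_nonneg _))) (ha.add hb)
    (.of_forall fun x => ?_)
  exact add_le_add (mul_le_of_le_one_right (ha0 x) (cos_sq_le_one _))
    (mul_le_of_le_one_right (hb0 x) (sin_sq_le_one _))

theorem Measure.integral_volumeIoiPow {F : Type*} [NormedAddCommGroup F] [NormedSpace ℝ F]
    (m : ℕ) (f : ℝ → F) :
    ∫ r, f r ∂volumeIoiPow m = ∫ r in Ioi (0 : ℝ), r ^ m • f r := by
  simp only [volumeIoiPow, ENNReal.ofReal]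
  rw [integral_withDensity_eq_integral_smul (measurable_subtype_coe.pow_const _).real_toNNReal,
    integral_subtype_comap measurableSet_Ioi fun r => (r ^ m).toNNReal • f r]
  refine setIntegral_congr_fun measurableSet_Ioi fun r (hr : 0 < r) => ?_
  rw [NNReal.smul_def, Real.coe_toNNReal _ (pow_nonneg hr.le _)]

theorem Measure.integrable_volumeIoiPow_iff {F : Type*} [NormedAddCommGroup F]
    [NormedSpace ℝ F] (m : ℕ) {f : ℝ → F} :
    Integrable (fun r : Ioi (0 : ℝ) => f r) (volumeIoiPow m) ↔
      IntegrableOn (fun r => r ^ m • f r) (Ioi 0) := by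
  rw [volumeIoiPow, integrable_withDensity_iff_integrable_smul' (by fun_prop) (by simp),
    integrableOn_iff_comap_subtypeVal measurableSet_Ioi]
  refine integrable_congr (.of_forall fun r => ?_)
  simp [ENNReal.toReal_ofReal (pow_nonneg r.2.out.le _)]

section Polar

variable {E F : Type*} [NormedAddCommGroup E] [NormedSpace ℝ E] [MeasurableSpace E]
  [BorelSpace E] [FiniteDimensional ℝ E] [Nontrivial E] (μ : Measure E) [μ.IsAddHaarMeasure]

theorem integral_eq_integral_toSphere_prod [NormedAddCommGroup F] [NormedSpace ℝ F]
    (f : E → F) :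
    ∫ x, f x ∂μ = ∫ p, f (p.2.1 • p.1.1) ∂μ.toSphere.prod (.volumeIoiPow (dim E - 1)) := by
  calc ∫ x, f x ∂μ = ∫ x : ({0}ᶜ : Set E), (f ∘ Subtype.val) x ∂μ.comap Subtype.val := by
        rw [Function.comp_def, integral_subtype_comap (measurableSet_singleton _).compl,
          restrict_compl_singleton]
    _ = _ := by
      rw [← comp_homeomorphUnitSphereProd_eq]
      exact μ.measurePreserving_homeomorphUnitSphereProd.integral_comp
        (homeomorphUnitSphereProd E).measurableEmbedding fun p => f (p.2.1 • p.1.1)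

theorem integrable_iff_integrable_toSphere_prod [NormedAddCommGroup F] {f : E → F} :
    Integrable f μ ↔
      Integrable (fun p => f (p.2.1 • p.1.1)) (μ.toSphere.prod (.volumeIoiPow (dim E - 1))) := by
  rw [← μ.measurePreserving_homeomorphUnitSphereProd.integrable_comp_emb
    (Homeomorph.measurableEmbedding _), comp_homeomorphUnitSphereProd_eq,
    ← integrableOn_iff_comap_subtypeVal (measurableSet_singleton _).compl, IntegrableOn,
    restrict_compl_singleton]

theorem integrable_norm_rpow_mul_exp_neg_mul_sq_norm {b p : ℝ} (hb : 0 < b)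
    (hp : -(dim E : ℝ) < p) : Integrable (fun x => ‖x‖ ^ p * exp (-b * ‖x‖ ^ 2)) μ := by
  have hdim : ((dim E - 1 : ℕ) : ℝ) = dim E - 1 := by
    rw [Nat.cast_pred Module.finrank_pos]
  refine (integrable_fun_norm_addHaar μ (f := fun r => r ^ p * exp (-b * r ^ 2))).2 ?_
  refine (integrable_rpow_mul_exp_neg_mul_sq hb (s := p + (dim E - 1 : ℕ))
    (by rw [hdim]; linarith)).integrableOn.congr_fun (fun r (hr : 0 < r) => ?_) measurableSet_Ioi
  dsimp only
  rw [rpow_add hr, rpow_natCast, smul_eq_mul]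
  ring

theorem tendsto_integral_mul_cos_mul_norm_atTop {f : E → ℝ} (hf : Integrable f μ) :
    Tendsto (fun s => ∫ x, f x * cos (s * ‖x‖) ∂μ) atTop (𝓝 0) := by
  -- In polar coordinates this is the cosine transform of `r ^ (n - 1) ∫_{|ω| = 1} f (r ω) dω`.
  set g : ℝ → ℝ := fun r => ∫ ω, f (r • ω.1) ∂μ.toSphere
  have hfp := (integrable_iff_integrable_toSphere_prod μ).1 hf
  have hg : IntegrableOn (fun r => r ^ (dim E - 1) • g r) (Ioi 0) :=
    (Measure.integrable_volumeIoiPow_iff _).1 hfp.integral_prod_right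
  refine (Real.tendsto_integral_mul_cos_mul_atTop
    (hg.integrable_indicator measurableSet_Ioi)).congr fun s => ?_
  have hfcos := hfp.mul_bdd (c := 1) (Continuous.aestronglyMeasurable (by fun_prop))
    (.of_forall fun p => abs_cos_le_one (s * ‖p.2.1 • p.1.1‖))
  rw [integral_eq_integral_toSphere_prod μ, integral_prod_symm _ hfcos,
    Measure.integral_volumeIoiPow (dim E - 1)
      (fun r => ∫ ω, f (r • ω.1) * cos (s * ‖r • ω.1‖) ∂μ.toSphere),
    ← integral_indicator measurableSet_Ioi]
  refine integral_congr_ae (.of_forall fun r => ?_)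
  by_cases hr : r ∈ Ioi (0 : ℝ)
  · have hnorm : ∀ ω : Metric.sphere (0 : E) 1, ‖r • ω.1‖ = r := fun ω => by
      rw [norm_smul, norm_eq_of_mem_sphere ω, mul_one, Real.norm_of_nonneg hr.out.le]
    simp only [indicator_of_mem hr, hnorm, integral_mul_const, smul_eq_mul, g]
    ring
  · simp [indicator_of_notMem hr]

theorem tendsto_integral_mul_cos_sq_add_mul_sin_sq_atTop {a b : E → ℝ} (ha : Integrable a μ)
    (hb : Integrable b μ) :
    Tendsto (fun s => ∫ x, a x * cos (s * ‖x‖) ^ 2 + b x * sin (s * ‖x‖) ^ 2 ∂μ) atTop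
      (𝓝 ((∫ x, a x ∂μ + ∫ x, b x ∂μ) / 2)) := by
  have hdiff : Integrable (fun x => (a x - b x) / 2) μ := (ha.sub hb).div_const 2
  have hosc := ((tendsto_integral_mul_cos_mul_norm_atTop μ hdiff).comp
    (tendsto_id.const_mul_atTop two_pos)).const_add ((∫ x, a x ∂μ + ∫ x, b x ∂μ) / 2)
  rw [add_zero] at hosc
  refine hosc.congr fun s => ?_
  have hsum : Integrable (fun x => (a x + b x) / 2) μ := (ha.add hb).div_const 2
  have hdouble : ∀ x, a x * cos (s * ‖x‖) ^ 2 + b x * sin (s * ‖x‖) ^ 2 =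
      (a x + b x) / 2 + (a x - b x) / 2 * cos (2 * s * ‖x‖) := fun x => by
    rw [sin_sq, cos_sq, ← mul_assoc]
    ring
  rw [Function.comp_apply, id, integral_congr_ae (.of_forall hdouble), integral_add hsum
    (hdiff.mul_bdd (c := 1) (Continuous.aestronglyMeasurable (by fun_prop))
      (.of_forall fun x => abs_cos_le_one _)), integral_div, integral_add ha hb]

end Polar

end MeasureTheory

section SecondOrderApproximation

variable {E : Type*} [NormedAddCommGroup E]

noncomputable def cosWeight (δ k A₀ A₁ : ℝ) (η : E) : ℝ :=
  ‖η‖ ^ (2 * k) * exp (-δ * ‖η‖ ^ 2) * (-A₀ * ‖η‖ ^ 2 + A₁) ^ 2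

theorem cosWeight_nonneg (δ k A₀ A₁ : ℝ) : 0 ≤ cosWeight (E := E) δ k A₀ A₁ :=
  fun η => by unfold cosWeight; positivity

variable [InnerProductSpace ℝ E]

noncomputable def sinWeight (δ k : ℝ) (B η : E) : ℝ :=
  ‖η‖ ^ (2 * k) * exp (-δ * ‖η‖ ^ 2) * (inner ℝ B η / ‖η‖) ^ 2

theorem sinWeight_nonneg (δ k : ℝ) (B : E) : 0 ≤ sinWeight δ k B :=
  fun η => by unfold sinWeight; positivity

theorem inner_div_norm_sq_le_norm_sq (B η : E) : (inner ℝ B η / ‖η‖) ^ 2 ≤ ‖B‖ ^ 2 := by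
  rcases eq_or_ne η 0 with rfl | hη
  · simp
  · rw [div_pow, div_le_iff₀ (by positivity), ← mul_pow, sq_le_sq,
      abs_of_nonneg (by positivity : 0 ≤ ‖B‖ * ‖η‖)]
    exact abs_real_inner_le_norm B η

variable [MeasurableSpace E] [BorelSpace E] [FiniteDimensional ℝ E] (μ : Measure E)
  [μ.IsAddHaarMeasure]

theorem integral_secondOrder_eq_rpow_mul_integral_weights (δ k A₀ A₁ : ℝ) (B : E) {t : ℝ}
    (ht : 0 < t) :
    ∫ ξ, ‖ξ‖ ^ (2 * k) * exp (-δ * ‖ξ‖ ^ 2 * t) *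
        ((-A₀ * t * ‖ξ‖ ^ 2 + A₁) ^ 2 * cos (‖ξ‖ * t) ^ 2
          + (inner ℝ B ξ / ‖ξ‖) ^ 2 * sin (‖ξ‖ * t) ^ 2) ∂μ =
      t ^ (-k - dim E / 2) * ∫ η, cosWeight δ k A₀ A₁ η * cos (√t * ‖η‖) ^ 2
        + sinWeight δ k B η * sin (√t * ‖η‖) ^ 2 ∂μ := by
  obtain ⟨s, hs, rfl⟩ : ∃ s, 0 < s ∧ t = s ^ 2 := ⟨√t, sqrt_pos.2 ht, (sq_sqrt ht.le).symm⟩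
  have hrescale : ∀ η : E,
      ‖s⁻¹ • η‖ ^ (2 * k) * exp (-δ * ‖s⁻¹ • η‖ ^ 2 * s ^ 2) *
        ((-A₀ * s ^ 2 * ‖s⁻¹ • η‖ ^ 2 + A₁) ^ 2 * cos (‖s⁻¹ • η‖ * s ^ 2) ^ 2
          + (inner ℝ B (s⁻¹ • η) / ‖s⁻¹ • η‖) ^ 2 * sin (‖s⁻¹ • η‖ * s ^ 2) ^ 2) =
      (s ^ (2 * k))⁻¹ * (cosWeight δ k A₀ A₁ η * cos (s * ‖η‖) ^ 2
        + sinWeight δ k B η * sin (s * ‖η‖) ^ 2) := fun η => by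
    have hs' := hs.ne'
    rw [norm_smul, norm_inv, Real.norm_of_nonneg hs.le, inner_smul_right,
      mul_rpow (inv_nonneg.2 hs.le) (norm_nonneg _), inv_rpow hs.le,
      mul_div_mul_left _ _ (inv_ne_zero hs'), cosWeight, sinWeight]
    have e1 : -δ * (s⁻¹ * ‖η‖) ^ 2 * s ^ 2 = -δ * ‖η‖ ^ 2 := by field_simp
    have e2 : -A₀ * s ^ 2 * (s⁻¹ * ‖η‖) ^ 2 + A₁ = -A₀ * ‖η‖ ^ 2 + A₁ := by field_simp
    have e3 : s⁻¹ * ‖η‖ * s ^ 2 = s * ‖η‖ := by field_simp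
    rw [e1, e2, e3]
    ring
  have hchange := Measure.integral_comp_inv_smul_of_nonneg μ (fun ξ : E => ‖ξ‖ ^ (2 * k) *
    exp (-δ * ‖ξ‖ ^ 2 * s ^ 2) * ((-A₀ * s ^ 2 * ‖ξ‖ ^ 2 + A₁) ^ 2 * cos (‖ξ‖ * s ^ 2) ^ 2
      + (inner ℝ B ξ / ‖ξ‖) ^ 2 * sin (‖ξ‖ * s ^ 2) ^ 2)) hs.le
  simp only [hrescale, integral_const_mul, smul_eq_mul] at hchange
  have hexp : (s ^ 2) ^ (-k - dim E / 2 : ℝ) = (s ^ dim E)⁻¹ * (s ^ (2 * k))⁻¹ := by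
    rw [← rpow_natCast s 2, ← rpow_mul hs.le, ← rpow_natCast s (dim E), ← rpow_neg hs.le,
      ← rpow_neg hs.le, ← rpow_add hs]
    congr 1
    push_cast
    ring
  rw [sqrt_sq hs.le, hexp, mul_assoc, hchange, ← mul_assoc, inv_mul_cancel₀ (by positivity),
    one_mul]

variable [Nontrivial E] {δ k : ℝ}

theorem integrable_cosWeight (hδ : 0 < δ) (hk : 0 ≤ k) (A₀ A₁ : ℝ) :
    Integrable (cosWeight δ k A₀ A₁) μ := by
  have hdim : (0 : ℝ) < dim E := Nat.cast_pos.2 Module.finrank_pos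
  have hpow : ∀ m : ℕ, Integrable (fun η : E => ‖η‖ ^ (2 * k + m) * exp (-δ * ‖η‖ ^ 2)) μ :=
    fun m => integrable_norm_rpow_mul_exp_neg_mul_sq_norm μ hδ
      (by linarith [Nat.cast_nonneg (α := ℝ) m])
  refine ((((hpow 4).const_mul (A₀ ^ 2)).sub ((hpow 2).const_mul (2 * A₀ * A₁))).add
    ((hpow 0).const_mul (A₁ ^ 2))).congr (.of_forall fun η => ?_)
  have hsplit : ∀ m : ℕ, ‖η‖ ^ (2 * k + m) = ‖η‖ ^ (2 * k) * ‖η‖ ^ m := fun m => by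
    rcases m.eq_zero_or_pos with rfl | hm
    · simp
    · exact rpow_add_natCast' (norm_nonneg η) (by positivity)
  simp only [Pi.add_apply, Pi.sub_apply, hsplit, cosWeight]
  ring

theorem integrable_sinWeight (hδ : 0 < δ) (hk : 0 ≤ k) (B : E) :
    Integrable (sinWeight δ k B) μ := by
  have hdim : (0 : ℝ) < dim E := Nat.cast_pos.2 Module.finrank_pos
  have hmeas : Measurable (sinWeight δ k B) := by unfold sinWeight; fun_prop
  refine ((integrable_norm_rpow_mul_exp_neg_mul_sq_norm μ hδ (p := 2 * k)
    (by linarith)).const_mul (‖B‖ ^ 2)).mono' hmeas.aestronglyMeasurable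
    (.of_forall fun η => ?_)
  rw [Real.norm_of_nonneg (sinWeight_nonneg δ k B η), sinWeight, mul_comm (‖B‖ ^ 2)]
  exact mul_le_mul_of_nonneg_left (inner_div_norm_sq_le_norm_sq B η) (by positivity)

theorem ae_cosWeight_ne_zero {A₀ A₁ : ℝ} (hA : A₀ ≠ 0 ∨ A₁ ≠ 0) :
    ∀ᵐ η ∂μ, cosWeight δ k A₀ A₁ η ≠ 0 := by
  have hroot : ∀ᵐ η ∂μ, -A₀ * ‖η‖ ^ 2 + A₁ ≠ 0 := by
    rcases eq_or_ne A₀ 0 with rfl | hA₀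
    · simpa using hA
    · refine ae_iff.2 (measure_mono_null (fun η hη => ?_) (μ.addHaar_sphere 0 √(A₁ / A₀)))
      have : ‖η‖ ^ 2 = A₁ / A₀ := by
        rw [eq_div_iff hA₀]; linarith [not_not.1 hη]
      rw [mem_sphere_zero_iff_norm, ← this, sqrt_sq (norm_nonneg η)]
  filter_upwards [μ.ae_ne 0, hroot] with η hη hroot
  exact mul_ne_zero (mul_ne_zero (rpow_pos_of_pos (norm_pos_iff.2 hη) _).ne' (exp_pos _).ne')
    (pow_ne_zero 2 hroot)

theorem ae_sinWeight_ne_zero {B : E} (hB : B ≠ 0) : ∀ᵐ η ∂μ, sinWeight δ k B η ≠ 0 := by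
  have hker : ∀ᵐ η ∂μ, inner ℝ B η ≠ 0 := by
    refine ae_iff.2 (measure_mono_null (fun η hη => ?_)
      (μ.addHaar_submodule (LinearMap.ker (innerSL ℝ B).toLinearMap) fun htop => hB ?_))
    · simpa using hη
    · simpa using (LinearMap.ker (innerSL ℝ B).toLinearMap).eq_top_iff'.1 htop B
  filter_upwards [μ.ae_ne 0, hker] with η hη hker
  exact mul_ne_zero (mul_ne_zero (rpow_pos_of_pos (norm_pos_iff.2 hη) _).ne' (exp_pos _).ne')
    (pow_ne_zero 2 (div_ne_zero hker (norm_ne_zero_iff.2 hη)))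

theorem integral_cosWeight_add_integral_sinWeight_pos {A₀ A₁ : ℝ} {B : E} (hδ : 0 < δ)
    (hk : 0 ≤ k) (hne : A₀ ≠ 0 ∨ A₁ ≠ 0 ∨ B ≠ 0) :
    0 < ∫ η, cosWeight δ k A₀ A₁ η ∂μ + ∫ η, sinWeight δ k B η ∂μ := by
  have hcos := integral_nonneg (μ := μ) (cosWeight_nonneg δ k A₀ A₁)
  have hsin := integral_nonneg (μ := μ) (sinWeight_nonneg δ k B)
  rcases or_assoc.2 hne with hA | hB
  · exact add_pos_of_pos_of_nonneg (integral_pos_of_nonneg_of_ae_ne_zero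
      (cosWeight_nonneg δ k A₀ A₁) (integrable_cosWeight μ hδ hk A₀ A₁)
      (ae_cosWeight_ne_zero μ hA)) hsin
  · exact add_pos_of_nonneg_of_pos hcos (integral_pos_of_nonneg_of_ae_ne_zero
      (sinWeight_nonneg δ k B) (integrable_sinWeight μ hδ hk B) (ae_sinWeight_ne_zero μ hB))

end SecondOrderApproximation

/-- Two-sided bound for the squared Ḣ^k norm of the second-order approximation ψ^{(2,0)}:
F(t) = ∫ |ξ|^{2k} e^{−δ|ξ|²t}[(−A₀t|ξ|²+A₁)²cos²(|ξ|t) + (B·ξ/|ξ|)²sin²(|ξ|t)]dξ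
satisfies c t^{−k−n/2} ≤ F(t) ≤ C t^{−k−n/2} for large t, provided A₀, A₁, B are not all 0. -/
theorem second_order_approximation_optimal_bounds (n : ℕ) (hn : 1 ≤ n)
    (δ : ℝ) (hδ : 0 < δ) (k : ℝ) (hk : 0 ≤ k)
    (A₀ A₁ : ℝ) (B : EuclideanSpace ℝ (Fin n))
    (hne : A₀ ≠ 0 ∨ A₁ ≠ 0 ∨ B ≠ 0)
    (F : ℝ → ℝ)
    (hF : ∀ t : ℝ, F t = ∫ ξ : EuclideanSpace ℝ (Fin n),
      ‖ξ‖ ^ (2 * k) * Real.exp (-δ * ‖ξ‖ ^ 2 * t) *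
        ((-A₀ * t * ‖ξ‖ ^ 2 + A₁) ^ 2 * Real.cos (‖ξ‖ * t) ^ 2
          + ((inner ℝ B ξ : ℝ) / ‖ξ‖) ^ 2 * Real.sin (‖ξ‖ * t) ^ 2)) :
    ∃ c > (0 : ℝ), ∃ C > (0 : ℝ), ∃ T > (0 : ℝ), ∀ t : ℝ, T ≤ t →
      c * t ^ (-k - (n : ℝ) / 2) ≤ F t ∧ F t ≤ C * t ^ (-k - (n : ℝ) / 2) := by
  have : Nontrivial (EuclideanSpace ℝ (Fin n)) :=
    Module.nontrivial_of_finrank_pos (by rw [finrank_euclideanSpace_fin]; omega)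
  have ha := integrable_cosWeight (volume : Measure (EuclideanSpace ℝ (Fin n))) hδ hk A₀ A₁
  have hb := integrable_sinWeight volume hδ hk B
  set I := (∫ η : EuclideanSpace ℝ (Fin n), cosWeight δ k A₀ A₁ η) + ∫ η, sinWeight δ k B η
  have hI : 0 < I := integral_cosWeight_add_integral_sinWeight_pos volume hδ hk hne
  have hG := (tendsto_integral_mul_cos_sq_add_mul_sin_sq_atTop volume ha hb).comp
    tendsto_sqrt_atTop
  obtain ⟨T, hT⟩ := eventually_atTop.1
    (hG.eventually (eventually_gt_nhds (by linarith : I / 4 < I / 2)))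
  refine ⟨I / 4, by positivity, I, hI, max T 1, by positivity, fun t ht => ?_⟩
  have ht0 : 0 < t := one_pos.trans_le ((le_max_right T 1).trans ht)
  have hpow : 0 < t ^ (-k - (n : ℝ) / 2) := rpow_pos_of_pos ht0 _
  rw [hF, integral_secondOrder_eq_rpow_mul_integral_weights volume δ k A₀ A₁ B ht0,
    finrank_euclideanSpace_fin, mul_comm _ (t ^ _), mul_comm I]
  exact ⟨mul_le_mul_of_nonneg_left (hT t (le_of_max_le_left ht)).le hpow.le,
    mul_le_mul_of_nonneg_left (integral_mul_cos_sq_add_mul_sin_sq_le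
      (cosWeight_nonneg δ k A₀ A₁) (sinWeight_nonneg δ k B) ha hb _) hpow.le⟩
end
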